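/- arXiv:0907.3037 — 2 statements merged into one kernel-verified Lean document; each statement's English description precedes it below -/
import Mathlib

section
/- Let d ≥ 1 and let P be a nonzero polynomial on ℝ^d of degree m with principal part P_m. Let N ∈ S^{d−1} satisfy P_m(N) ≠ 0. Then every Q ∈ L_N(P) is the constant polynomial P_m(N)/|P_m(N)|; in particular every element of L_N(P) is constant. -/
/-!
Write `ξ = r u` with `r = |ξ|` and `u → N`. The coefficient of `η^α` in `P_ξ` is `∂^α P(ξ) / α!`,
a polynomial in `ξ` of degree at most `m - |α|`; so after division by `r^m` the constant
coefficient `P(ξ) / r^m` tends to `P_m(N)`, and every other coefficient tends to `0`. Hence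
`r^{-m} P_ξ → P_m(N)` coefficientwise, with all supports in a fixed finite set, so that also
`r^{-m} P̃_ξ(0) → |P_m(N)| ≠ 0`. Since `P_ξ / P̃_ξ(0)` is unchanged when `P_ξ` is rescaled by
`r^{-m}`, it converges coefficientwise to the constant `P_m(N) / |P_m(N)|`, and convergence for
`Q ↦ Q̃(0)` forces the same coefficientwise limit.
-/

open MvPolynomial Filter Topology RealInnerProductSpace

noncomputable section

/-- Evaluation of a complex-coefficient polynomial at a real point of `ℝ^d`. -/
def evalP {d : ℕ} (P : MvPolynomial (Fin d) ℂ) (x : EuclideanSpace ℝ (Fin d)) : ℂ :=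
  MvPolynomial.eval (fun i => (x i : ℂ)) P

/-- The shifted polynomial `P_ξ(η) = P(η + ξ)`. -/
def shiftP {d : ℕ} (P : MvPolynomial (Fin d) ℂ) (ξ : EuclideanSpace ℝ (Fin d)) :
    MvPolynomial (Fin d) ℂ :=
  MvPolynomial.aeval (fun i => MvPolynomial.X i + MvPolynomial.C ((ξ i : ℂ))) P

/-- `Q̃(0) = sqrt (∑_α |Q^{(α)}(0)|²)`, using `Q^{(α)}(0) = α! ⬝ coeff α Q`. -/
def tildeZero {d : ℕ} (Q : MvPolynomial (Fin d) ℂ) : ℝ :=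
  Real.sqrt (∑ α ∈ Q.support,
    ((∏ i, Nat.factorial (α i) : ℝ) * ‖MvPolynomial.coeff α Q‖) ^ 2)

/-- The normalized shifted polynomial `P_ξ / P̃_ξ(0)`. -/
def normShift {d : ℕ} (P : MvPolynomial (Fin d) ℂ) (ξ : EuclideanSpace ℝ (Fin d)) :
    MvPolynomial (Fin d) ℂ :=
  ((tildeZero (shiftP P ξ) : ℂ))⁻¹ • shiftP P ξ

/-- `L(P)`: localizations of `P` at infinity (limits taken in the norm `Q ↦ Q̃(0)`). -/
def Lset {d : ℕ} (P : MvPolynomial (Fin d) ℂ) : Set (MvPolynomial (Fin d) ℂ) :=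
  {Q | ∃ ξ : ℕ → EuclideanSpace ℝ (Fin d),
    Tendsto (fun n => ‖ξ n‖) atTop atTop ∧
    Tendsto (fun n => tildeZero (normShift P (ξ n) - Q)) atTop (nhds 0)}

/-- `L_N(P)`: localizations of `P` at infinity in direction `N`. -/
def LNset {d : ℕ} (P : MvPolynomial (Fin d) ℂ) (N : EuclideanSpace ℝ (Fin d)) :
    Set (MvPolynomial (Fin d) ℂ) :=
  {Q | ∃ ξ : ℕ → EuclideanSpace ℝ (Fin d),
    Tendsto (fun n => ‖ξ n‖) atTop atTop ∧
    Tendsto (fun n => ‖ξ n‖⁻¹ • ξ n) atTop (nhds N) ∧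
    Tendsto (fun n => tildeZero (normShift P (ξ n) - Q)) atTop (nhds 0)}

/-- `P̃_V(ξ,t) = sup {|P(ξ+η)| : η ∈ V, |η| ≤ t}`. -/
def tildeSupV {d : ℕ} (P : MvPolynomial (Fin d) ℂ)
    (V : Submodule ℝ (EuclideanSpace ℝ (Fin d)))
    (ξ : EuclideanSpace ℝ (Fin d)) (t : ℝ) : ℝ :=
  sSup ((fun η => ‖evalP P (ξ + η)‖) '' {η | η ∈ V ∧ ‖η‖ ≤ t})

/-- `P̃(ξ,t) = P̃_{ℝ^d}(ξ,t)`. -/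
def tildeSup {d : ℕ} (P : MvPolynomial (Fin d) ℂ)
    (ξ : EuclideanSpace ℝ (Fin d)) (t : ℝ) : ℝ :=
  tildeSupV P ⊤ ξ t

/-- The filter `|ξ| → ∞` on `ℝ^d`. -/
def toInfty (d : ℕ) : Filter (EuclideanSpace ℝ (Fin d)) :=
  Filter.comap (fun ξ => ‖ξ‖) Filter.atTop

/-- `σ_P(V) = inf_{t ≥ 1} liminf_{|ξ|→∞} P̃_V(ξ,t) / P̃(ξ,t)`. -/
def sigmaP {d : ℕ} (P : MvPolynomial (Fin d) ℂ)
    (V : Submodule ℝ (EuclideanSpace ℝ (Fin d))) : ℝ :=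
  sInf {r | ∃ t : ℝ, 1 ≤ t ∧
    r = Filter.liminf (fun ξ => tildeSupV P V ξ t / tildeSup P ξ t) (toInfty d)}

/-- `σ_P(y) = σ_P(span {y})`. -/
def sigmaPt {d : ℕ} (P : MvPolynomial (Fin d) ℂ) (y : EuclideanSpace ℝ (Fin d)) : ℝ :=
  sigmaP P (Submodule.span ℝ {y})

/-- The reflected polynomial `P̌(x) = P(-x)`. -/
def checkP {d : ℕ} (P : MvPolynomial (Fin d) ℂ) : MvPolynomial (Fin d) ℂ :=
  MvPolynomial.aeval (fun i => -MvPolynomial.X i) P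

/-- `Λ(Q) = {η : Q(ξ + tη) = Q(ξ) for all ξ, t}` as a set. -/
def LambdaSet {d : ℕ} (Q : MvPolynomial (Fin d) ℂ) : Set (EuclideanSpace ℝ (Fin d)) :=
  {η | ∀ (ξ : EuclideanSpace ℝ (Fin d)) (t : ℝ), evalP Q (ξ + t • η) = evalP Q ξ}

/-- The dual cone `Γ° = {ξ : ⟨y,ξ⟩ ≥ 0 for all y ∈ Γ}`. -/
def dualCone {d : ℕ} (Γ : Set (EuclideanSpace ℝ (Fin d))) : Set (EuclideanSpace ℝ (Fin d)) :=
  {ξ | ∀ y ∈ Γ, 0 ≤ ⟪y, ξ⟫}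

namespace MvPolynomial

variable {σ R : Type*} [CommSemiring R]

theorem IsHomogeneous.eval_smul {φ : MvPolynomial σ R} {n : ℕ} (hφ : φ.IsHomogeneous n)
    (c : R) (x : σ → R) : eval (c • x) φ = c ^ n * eval x φ := by
  rw [eval_eq, eval_eq, Finset.mul_sum]
  refine Finset.sum_congr rfl fun β hβ => ?_
  have hβn : β.degree = n := (hφ.degree_eq_sum_deg_support hβ).symm
  simp only [Pi.smul_apply, smul_eq_mul, mul_pow, Finset.prod_mul_distrib,
    Finset.prod_pow_eq_pow_sum, ← Finsupp.degree_apply, hβn]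
  ring

theorem homogeneousComponent_pderiv (n : ℕ) (i : σ) (φ : MvPolynomial σ R) :
    homogeneousComponent n (pderiv i φ) = pderiv i (homogeneousComponent (n + 1) φ) := by
  ext β
  simp only [coeff_homogeneousComponent, coeff_pderiv, map_add, Finsupp.degree_single,
    add_left_inj]
  split_ifs <;> simp

theorem totalDegree_pderiv_le (i : σ) (φ : MvPolynomial σ R) :
    (pderiv i φ).totalDegree ≤ φ.totalDegree := by
  refine Finset.sup_le fun β hβ => ?_
  rw [mem_support_iff, coeff_pderiv] at hβ
  have hβ' : β + Finsupp.single i 1 ∈ φ.support := mem_support_iff.mpr (left_ne_zero_of_mul hβ)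
  refine le_trans ?_ (le_totalDegree hβ')
  show β.degree ≤ (β + Finsupp.single i 1).degree
  simp

end MvPolynomial

section Shift

variable {d : ℕ}

theorem evalP_smul_of_isHomogeneous {φ : MvPolynomial (Fin d) ℂ} {n : ℕ} (hφ : φ.IsHomogeneous n)
    (r : ℝ) (x : EuclideanSpace ℝ (Fin d)) : evalP φ (r • x) = (r : ℂ) ^ n * evalP φ x := by
  have hx : (fun i => ((r • x) i : ℂ)) = (r : ℂ) • fun i => (x i : ℂ) := by
    funext i
    simp
  rw [evalP, evalP, ← hφ.eval_smul, hx]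

theorem continuous_evalP (P : MvPolynomial (Fin d) ℂ) : Continuous (evalP P) :=
  (MvPolynomial.continuous_eval P).comp <| continuous_pi fun i =>
    Complex.continuous_ofReal.comp (EuclideanSpace.proj i).continuous

theorem coeff_zero_shiftP (P : MvPolynomial (Fin d) ℂ) (ξ : EuclideanSpace ℝ (Fin d)) :
    (shiftP P ξ).coeff 0 = evalP P ξ := by
  rw [← constantCoeff_eq]
  induction P using MvPolynomial.induction_on with
  | C a => simp [shiftP, evalP]
  | add p q hp hq => simp_all [shiftP, evalP]
  | mul_X p j hp => simp_all [shiftP, evalP]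

theorem pderiv_shiftP (i : Fin d) (P : MvPolynomial (Fin d) ℂ) (ξ : EuclideanSpace ℝ (Fin d)) :
    pderiv i (shiftP P ξ) = shiftP (pderiv i P) ξ := by
  induction P using MvPolynomial.induction_on with
  | C a => simp [shiftP]
  | add p q hp hq => simp_all [shiftP]
  | mul_X p j hp =>
    simp only [shiftP, map_mul, aeval_X, Derivation.leibniz, map_add, pderiv_C, add_zero,
      pderiv_X, smul_eq_mul] at hp ⊢
    rw [hp]
    by_cases h : i = j
    · subst h; simp
    · simp [Ne.symm h]

theorem totalDegree_shiftP_le (P : MvPolynomial (Fin d) ℂ) (ξ : EuclideanSpace ℝ (Fin d)) :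
    (shiftP P ξ).totalDegree ≤ P.totalDegree := by
  conv_lhs => rw [shiftP, P.as_sum, map_sum]
  refine totalDegree_finsetSum_le fun β hβ => ?_
  rw [aeval_monomial]
  refine (totalDegree_mul _ _).trans ?_
  rw [algebraMap_eq, totalDegree_C, zero_add]
  refine (totalDegree_finsetProd _ _).trans <| le_trans ?_ (le_totalDegree hβ)
  refine Finset.sum_le_sum fun j _ => (totalDegree_pow _ _).trans ?_
  calc β j * (X j + C (ξ j : ℂ)).totalDegree ≤ β j * 1 := by
        gcongr
        exact (totalDegree_add _ _).trans (by simp [totalDegree_X])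
    _ = β j := mul_one _

end Shift

section Asymptotics

variable {d : ℕ} {ι : Type*} {l : Filter ι} {ξ : ι → EuclideanSpace ℝ (Fin d)}
  {N : EuclideanSpace ℝ (Fin d)}

theorem tendsto_evalP_div_pow (hξ : Tendsto (fun n => ‖ξ n‖) l atTop)
    (hu : Tendsto (fun n => ‖ξ n‖⁻¹ • ξ n) l (𝓝 N)) {P : MvPolynomial (Fin d) ℂ} {m : ℕ}
    (hP : P.totalDegree ≤ m) :
    Tendsto (fun n => evalP P (ξ n) / (‖ξ n‖ : ℂ) ^ m) l
      (𝓝 (evalP (homogeneousComponent m P) N)) := by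
  -- `F s x = s ^ m P(x / s)` written through the homogeneous components, continuous at `s = 0`
  let F : ℝ × EuclideanSpace ℝ (Fin d) → ℂ := fun p =>
    ∑ k ∈ Finset.range (m + 1), (p.1 : ℂ) ^ (m - k) * evalP (homogeneousComponent k P) p.2
  have hF : Continuous F := continuous_finsetSum _ fun k _ =>
    ((Complex.continuous_ofReal.comp continuous_fst).pow _).mul
      ((continuous_evalP _).comp continuous_snd)
  have hF0 : F (0, N) = evalP (homogeneousComponent m P) N := by
    refine (Finset.sum_eq_single m (fun k hk hkm => ?_) (by simp)).trans (by simp)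
    have : m - k ≠ 0 := by have := Finset.mem_range.mp hk; omega
    simp [this]
  have hsum : ∀ x, evalP P x = ∑ k ∈ Finset.range (m + 1), evalP (homogeneousComponent k P) x := by
    intro x
    conv_lhs => rw [← sum_homogeneousComponent P]
    rw [evalP, map_sum]
    refine Finset.sum_subset (Finset.range_subset_range.mpr (by omega)) fun k hk hk' => ?_
    rw [homogeneousComponent_eq_zero _ _ (by rw [Finset.mem_range] at hk'; omega), map_zero]
  have hFξ : ∀ n, evalP P (ξ n) / (‖ξ n‖ : ℂ) ^ m = F (‖ξ n‖⁻¹, ‖ξ n‖⁻¹ • ξ n) := by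
    intro n
    rw [hsum, Finset.sum_div]
    refine Finset.sum_congr rfl fun k hk => ?_
    have hkm : m - k + k = m := Nat.sub_add_cancel (Nat.lt_succ_iff.mp (Finset.mem_range.mp hk))
    rw [evalP_smul_of_isHomogeneous (homogeneousComponent_isHomogeneous k P), ← mul_assoc,
      ← pow_add, hkm, Complex.ofReal_inv, inv_pow, div_eq_inv_mul]
  simp_rw [hFξ, ← hF0]
  exact hF.continuousAt.tendsto.comp (hξ.inv_tendsto_atTop.prodMk_nhds hu)

theorem tendsto_coeff_shiftP_div_pow (hξ : Tendsto (fun n => ‖ξ n‖) l atTop)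
    (hu : Tendsto (fun n => ‖ξ n‖⁻¹ • ξ n) l (𝓝 N)) {m : ℕ} (α : Fin d →₀ ℕ) :
    ∀ {P : MvPolynomial (Fin d) ℂ}, P.totalDegree ≤ m →
      Tendsto (fun n => (shiftP P (ξ n)).coeff α / (‖ξ n‖ : ℂ) ^ m) l
        (𝓝 ((C (evalP (homogeneousComponent m P) N)).coeff α)) := by
  induction α using WellFoundedLT.induction with
  | _ α ih =>
  intro P hP
  rcases eq_or_ne α 0 with rfl | hα
  · simpa [coeff_zero_shiftP] using tendsto_evalP_div_pow hξ hu hP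
  obtain ⟨i, hi⟩ : ∃ i, α i ≠ 0 := by simpa [Finsupp.ext_iff] using hα
  set β := α - Finsupp.single i 1
  have hβα : β + Finsupp.single i 1 = α :=
    tsub_add_cancel_of_le (Finsupp.single_le_iff.mpr (Nat.one_le_iff_ne_zero.mpr hi))
  have hβ : β < α := hβα ▸ lt_add_of_pos_right β (pos_iff_ne_zero.mpr (by simp))
  have hcoeff : ∀ x, (shiftP P x).coeff α = (shiftP (pderiv i P) x).coeff β / ((β i : ℂ) + 1) := by
    intro x
    rw [← pderiv_shiftP, coeff_pderiv, hβα, mul_div_cancel_right₀ _ (by norm_cast)]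
  have hlim := (ih β hβ ((totalDegree_pderiv_le i P).trans hP)).div_const ((β i : ℂ) + 1)
  rw [homogeneousComponent_pderiv, homogeneousComponent_eq_zero _ _ (by omega)] at hlim
  simpa [hcoeff, div_div_eq_mul_div, div_right_comm _ ((β i : ℂ) + 1), coeff_C, Ne.symm hα,
    evalP] using hlim

end Asymptotics

section TildeZero

variable {d : ℕ}

theorem tildeZero_eq_of_support_subset {Q : MvPolynomial (Fin d) ℂ} {T : Finset (Fin d →₀ ℕ)}
    (h : Q.support ⊆ T) :
    tildeZero Q = √(∑ α ∈ T, ((∏ i, (α i).factorial : ℝ) * ‖Q.coeff α‖) ^ 2) := by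
  rw [tildeZero, Finset.sum_subset h fun α _ hα => by simp [notMem_support_iff.mp hα]]

theorem norm_coeff_le_tildeZero (Q : MvPolynomial (Fin d) ℂ) (α : Fin d →₀ ℕ) :
    ‖Q.coeff α‖ ≤ tildeZero Q := by
  rw [tildeZero_eq_of_support_subset (Finset.subset_union_left (s₂ := {α}))]
  have hfact : (1 : ℝ) ≤ ∏ i, ((α i).factorial : ℝ) := by
    exact_mod_cast Finset.one_le_prod' fun i _ => (α i).factorial_pos
  calc ‖Q.coeff α‖ ≤ (∏ i, ((α i).factorial : ℝ)) * ‖Q.coeff α‖ :=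
        le_mul_of_one_le_left (norm_nonneg _) hfact
    _ = √(((∏ i, ((α i).factorial : ℝ)) * ‖Q.coeff α‖) ^ 2) :=
        (Real.sqrt_sq (by positivity)).symm
    _ ≤ _ := Real.sqrt_le_sqrt <| Finset.single_le_sum (f := fun β =>
        ((∏ i, ((β i).factorial : ℝ)) * ‖Q.coeff β‖) ^ 2) (fun _ _ => sq_nonneg _) (by simp)

theorem tildeZero_smul (c : ℂ) (Q : MvPolynomial (Fin d) ℂ) :
    tildeZero (c • Q) = ‖c‖ * tildeZero Q := by
  rw [tildeZero_eq_of_support_subset (support_smul (a := c) (f := Q)), tildeZero,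
    ← Real.sqrt_sq (norm_nonneg c), ← Real.sqrt_mul (sq_nonneg _), Finset.mul_sum]
  congr 1
  refine Finset.sum_congr rfl fun α _ => ?_
  rw [coeff_smul, smul_eq_mul, norm_mul]
  ring

theorem tildeZero_C (c : ℂ) : tildeZero (C c : MvPolynomial (Fin d) ℂ) = ‖c‖ := by
  rw [C_apply, tildeZero_eq_of_support_subset support_monomial_subset]
  simp

theorem inv_tildeZero_smul_smul {t : ℝ} (ht : 0 < t) (Q : MvPolynomial (Fin d) ℂ) :
    ((tildeZero ((t : ℂ) • Q) : ℂ))⁻¹ • ((t : ℂ) • Q) = ((tildeZero Q : ℂ))⁻¹ • Q := by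
  rw [tildeZero_smul, smul_smul, Complex.norm_real, Real.norm_of_nonneg ht.le, Complex.ofReal_mul,
    mul_inv, mul_right_comm, inv_mul_cancel₀ (by exact_mod_cast ht.ne'), one_mul]

variable {ι : Type*} {l : Filter ι}

theorem tendsto_coeff_of_tendsto_tildeZero_sub {S : ι → MvPolynomial (Fin d) ℂ}
    {Q : MvPolynomial (Fin d) ℂ} (h : Tendsto (fun i => tildeZero (S i - Q)) l (𝓝 0))
    (α : Fin d →₀ ℕ) : Tendsto (fun i => (S i).coeff α) l (𝓝 (Q.coeff α)) := by
  rw [tendsto_iff_norm_sub_tendsto_zero]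
  exact squeeze_zero (fun _ => norm_nonneg _)
    (fun i => (coeff_sub (Fin d) α (S i) Q).symm ▸ norm_coeff_le_tildeZero _ α) h

theorem tendsto_tildeZero_of_tendsto_coeff {S : ι → MvPolynomial (Fin d) ℂ}
    {R : MvPolynomial (Fin d) ℂ} {m : ℕ} (hS : ∀ i, (S i).totalDegree ≤ m)
    (hR : R.totalDegree ≤ m) (h : ∀ α, Tendsto (fun i => (S i).coeff α) l (𝓝 (R.coeff α))) :
    Tendsto (fun i => tildeZero (S i)) l (𝓝 (tildeZero R)) := by
  set T := (Finsupp.finite_of_degree_le (σ := Fin d) m).toFinset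
  have hT : ∀ {Q : MvPolynomial (Fin d) ℂ}, Q.totalDegree ≤ m → Q.support ⊆ T := fun hQ α hα =>
    by rw [Set.Finite.mem_toFinset]; exact (le_totalDegree hα).trans hQ
  simp_rw [tildeZero_eq_of_support_subset (hT (hS _)), tildeZero_eq_of_support_subset (hT hR)]
  exact (tendsto_finsetSum T fun α _ => ((h α).norm.const_mul _).pow 2).sqrt

theorem tendsto_coeff_inv_tildeZero_smul {S : ι → MvPolynomial (Fin d) ℂ}
    {R : MvPolynomial (Fin d) ℂ} {m : ℕ} (hS : ∀ i, (S i).totalDegree ≤ m)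
    (hR : R.totalDegree ≤ m) (hR0 : tildeZero R ≠ 0)
    (h : ∀ α, Tendsto (fun i => (S i).coeff α) l (𝓝 (R.coeff α))) (α : Fin d →₀ ℕ) :
    Tendsto (fun i => (((tildeZero (S i) : ℂ))⁻¹ • S i).coeff α) l
      (𝓝 ((((tildeZero R : ℂ))⁻¹ • R).coeff α)) := by
  simp only [coeff_smul, smul_eq_mul]
  refine Tendsto.mul ?_ (h α)
  exact ((Complex.continuous_ofReal.tendsto _).comp
    (tendsto_tildeZero_of_tendsto_coeff hS hR h)).inv₀ (by exact_mod_cast hR0)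

end TildeZero

theorem stmt1_general (d : ℕ) (P : MvPolynomial (Fin d) ℂ)
    (N : EuclideanSpace ℝ (Fin d))
    (hPm : evalP (MvPolynomial.homogeneousComponent P.totalDegree P) N ≠ 0)
    (Q : MvPolynomial (Fin d) ℂ) (hQ : Q ∈ LNset P N) :
    Q = MvPolynomial.C (evalP (MvPolynomial.homogeneousComponent P.totalDegree P) N /
      ((‖evalP (MvPolynomial.homogeneousComponent P.totalDegree P) N‖ : ℝ) : ℂ)) := by
  obtain ⟨ξ, hξ, hu, hQ⟩ := hQ
  set m := P.totalDegree
  set c := evalP (homogeneousComponent m P) N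
  set S : ℕ → MvPolynomial (Fin d) ℂ := fun n => (((‖ξ n‖ ^ m)⁻¹ : ℝ) : ℂ) • shiftP P (ξ n)
  have hSdeg : ∀ n, (S n).totalDegree ≤ m := fun n =>
    (totalDegree_smul_le _ _).trans (totalDegree_shiftP_le P (ξ n))
  have hS : ∀ α, Tendsto (fun n => (S n).coeff α) atTop (𝓝 ((C c).coeff α)) := fun α => by
    simpa [S, coeff_smul, div_eq_inv_mul] using tendsto_coeff_shiftP_div_pow hξ hu α le_rfl
  have hnormShift : ∀ᶠ n in atTop, ((tildeZero (S n) : ℂ))⁻¹ • S n = normShift P (ξ n) := by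
    filter_upwards [hξ.eventually_gt_atTop 0] with n hn
    exact inv_tildeZero_smul_smul (by positivity) _
  have hlim := tendsto_coeff_inv_tildeZero_smul hSdeg ((totalDegree_C c).trans_le m.zero_le)
    (by simpa [tildeZero_C] using hPm) hS
  ext α
  refine tendsto_nhds_unique (tendsto_coeff_of_tendsto_tildeZero_sub hQ α) ?_
  convert (hlim α).congr' (hnormShift.mono fun n hn => by rw [hn]) using 2
  rw [tildeZero_C, coeff_smul, coeff_C, coeff_C, smul_eq_mul]
  split_ifs <;> simp [div_eq_inv_mul]

/-- Lemma 2.1 ii): if `P_m(N) ≠ 0` for `N ∈ S^{d-1}`, then every `Q ∈ L_N(P)` is the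
constant polynomial `P_m(N)/|P_m(N)|`. -/
theorem stmt1 (d : ℕ) (hd : 1 ≤ d) (P : MvPolynomial (Fin d) ℂ) (hP : P ≠ 0)
    (N : EuclideanSpace ℝ (Fin d)) (hN : ‖N‖ = 1)
    (hPm : evalP (MvPolynomial.homogeneousComponent P.totalDegree P) N ≠ 0)
    (Q : MvPolynomial (Fin d) ℂ) (hQ : Q ∈ LNset P N) :
    Q = MvPolynomial.C (evalP (MvPolynomial.homogeneousComponent P.totalDegree P) N /
      ((‖evalP (MvPolynomial.homogeneousComponent P.totalDegree P) N‖ : ℝ) : ℂ)) :=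
  stmt1_general d P N hPm Q hQ

end
end

section
/- Let d ≥ 3 and let P be the polynomial on ℝ^d given by P(x₁,…,x_d) = x₁² − x₂² − ⋯ − x_d². Then σ_P(e_d) = 0, where e_d = (0,…,0,1), although the principal part P₂ = P satisfies P₂(e_d) = −1 ≠ 0. In particular, for d ≥ 3 the inclusion {y ∈ S^{d−1} : σ_P(y) = 0} ⊆ {y ∈ S^{d−1} : P_m(y) = 0} fails in general. -/
open MvPolynomial Filter Topology RealInnerProductSpace

noncomputable section

/-! Along `ξₙ = n (e₁ + e₂)`, a null vector of `P = x₁² - x₂² - ⋯ - x_d²` that is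
`P`-orthogonal to `e_d`, one has `P(ξₙ + s e_d) = -s²`, bounded for `|s| ≤ t`, whereas
`P(ξₙ + t e₁) = 2nt + t² ≥ n`. Hence `P̃_V(ξₙ, t) / P̃(ξₙ, t) = O(t² / n)` for `V = ℝ e_d`, and
`σ_P(e_d) = 0`. On the other hand `P` is homogeneous of degree 2, so `P₂(e_d) = P(e_d) = -1`. -/

section

variable {d : ℕ}

section tildeSupV

variable (P : MvPolynomial (Fin d) ℂ) (V : Submodule ℝ (EuclideanSpace ℝ (Fin d)))
  (ξ : EuclideanSpace ℝ (Fin d)) {t : ℝ}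

theorem bddAbove_norm_evalP_image (t : ℝ) :
    BddAbove ((fun η => ‖evalP P (ξ + η)‖) '' {η | η ∈ V ∧ ‖η‖ ≤ t}) := by
  have hK : IsCompact {η : EuclideanSpace ℝ (Fin d) | η ∈ V ∧ ‖η‖ ≤ t} := by
    have hset : {η | η ∈ V ∧ ‖η‖ ≤ t} = (V : Set _) ∩ Metric.closedBall 0 t := by
      ext η
      simp
    exact hset ▸ (isCompact_closedBall 0 t).inter_left V.closed_of_finiteDimensional
  exact (hK.image ((continuous_evalP P).comp (continuous_const_add ξ)).norm).bddAbove

theorem norm_evalP_le_tildeSupV {η : EuclideanSpace ℝ (Fin d)} (hη : η ∈ V) (hηt : ‖η‖ ≤ t) :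
    ‖evalP P (ξ + η)‖ ≤ tildeSupV P V ξ t :=
  le_csSup (bddAbove_norm_evalP_image P V ξ t) ⟨η, ⟨hη, hηt⟩, rfl⟩

theorem tildeSupV_le {C : ℝ} (ht : 0 ≤ t)
    (h : ∀ η ∈ V, ‖η‖ ≤ t → ‖evalP P (ξ + η)‖ ≤ C) : tildeSupV P V ξ t ≤ C :=
  csSup_le ⟨_, 0, ⟨V.zero_mem, by simpa using ht⟩, rfl⟩ fun _ ⟨η, ⟨hη, hηt⟩, hy⟩ =>
    hy ▸ h η hη hηt

theorem tildeSupV_nonneg (ht : 0 ≤ t) : 0 ≤ tildeSupV P V ξ t :=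
  (norm_nonneg _).trans (norm_evalP_le_tildeSupV P V ξ V.zero_mem (by simpa using ht))

theorem tildeSupV_le_tildeSup (ht : 0 ≤ t) : tildeSupV P V ξ t ≤ tildeSup P ξ t :=
  tildeSupV_le P V ξ ht fun _ _ hηt => norm_evalP_le_tildeSupV P ⊤ ξ Submodule.mem_top hηt

end tildeSupV

/-- The quotient lies in `[0, 1]`, so its liminf along `|ξ| → ∞` is squeezed between `0` and
its limit along `u`. -/
theorem sigmaP_eq_zero_of_tendsto {P : MvPolynomial (Fin d) ℂ}
    {V : Submodule ℝ (EuclideanSpace ℝ (Fin d))} (u : ℕ → EuclideanSpace ℝ (Fin d))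
    (hu : Tendsto (fun n => ‖u n‖) atTop atTop)
    (h : ∀ t, 1 ≤ t →
      Tendsto (fun n => tildeSupV P V (u n) t / tildeSup P (u n) t) atTop (𝓝 0)) :
    sigmaP P V = 0 := by
  have hu' : Tendsto u atTop (toInfty d) := tendsto_comap_iff.mpr hu
  have : (toInfty d).NeBot := neBot_of_le hu'
  have hliminf : ∀ t, 1 ≤ t →
      liminf (fun ξ => tildeSupV P V ξ t / tildeSup P ξ t) (toInfty d) = 0 := by
    intro t ht
    have ht0 : (0 : ℝ) ≤ t := zero_le_one.trans ht
    have hnonneg : ∀ ξ, 0 ≤ tildeSupV P V ξ t / tildeSup P ξ t := fun ξ =>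
      div_nonneg (tildeSupV_nonneg P V ξ ht0) (tildeSupV_nonneg P ⊤ ξ ht0)
    have hle_one : ∀ ξ, tildeSupV P V ξ t / tildeSup P ξ t ≤ 1 := fun ξ =>
      div_le_one_of_le₀ (tildeSupV_le_tildeSup P V ξ ht0) (tildeSupV_nonneg P ⊤ ξ ht0)
    refine le_antisymm ?_ (le_liminf_of_le (isCoboundedUnder_ge_of_le _ hle_one)
      (Eventually.of_forall hnonneg))
    calc liminf (fun ξ => tildeSupV P V ξ t / tildeSup P ξ t) (toInfty d)
        ≤ liminf (fun ξ => tildeSupV P V ξ t / tildeSup P ξ t) (map u atTop) :=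
          liminf_le_liminf_of_le hu' (isBoundedUnder_of ⟨0, hnonneg⟩)
            (isCoboundedUnder_ge_of_le _ hle_one)
      _ = 0 := (h t ht).liminf_eq
  have hset : {r | ∃ t : ℝ, 1 ≤ t ∧
      r = liminf (fun ξ => tildeSupV P V ξ t / tildeSup P ξ t) (toInfty d)} = {0} := by
    ext r
    constructor
    · rintro ⟨t, ht, rfl⟩
      exact hliminf t ht
    · rintro rfl
      exact ⟨1, le_rfl, (hliminf 1 le_rfl).symm⟩
  rw [sigmaP, hset, csInf_singleton]

theorem MvPolynomial.IsHomogeneous.homogeneousComponent_totalDegree {σ R : Type*}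
    [CommSemiring R] {p : MvPolynomial σ R} {n : ℕ} (hp : p.IsHomogeneous n) :
    homogeneousComponent p.totalDegree p = p := by
  obtain rfl | hne := eq_or_ne p 0
  · exact map_zero _
  · rw [hp.totalDegree hne, homogeneousComponent_eq_self hp]

/-- For `i₀ = 0` and `s = {i | i ≠ 0}` this is `x₁² - x₂² - ⋯ - x_d²` (coordinates of `Fin d`
are `0`-indexed). -/
def lorentzForm (i₀ : Fin d) (s : Finset (Fin d)) : MvPolynomial (Fin d) ℂ :=
  X i₀ ^ 2 - ∑ i ∈ s, X i ^ 2

section lorentzForm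

open EuclideanSpace

variable (i₀ : Fin d) (s : Finset (Fin d))

theorem evalP_lorentzForm (x : EuclideanSpace ℝ (Fin d)) :
    evalP (lorentzForm i₀ s) x = ((x i₀ ^ 2 - ∑ i ∈ s, x i ^ 2 : ℝ) : ℂ) := by
  simp [lorentzForm, evalP]

theorem isHomogeneous_lorentzForm : (lorentzForm i₀ s).IsHomogeneous 2 :=
  (isHomogeneous_X_pow i₀ 2).sub <| IsHomogeneous.sum _ _ _ fun i _ => isHomogeneous_X_pow i 2

variable {i₀ s}

theorem evalP_lorentzForm_single (h₀ : i₀ ∉ s) {i : Fin d} (hi : i ∈ s) :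
    evalP (lorentzForm i₀ s) (single i 1) = -1 := by
  have hi₀ : i₀ ≠ i := (ne_of_mem_of_not_mem hi h₀).symm
  simp [evalP_lorentzForm, hi₀, hi]

variable {i₁ i₂ : Fin d}

theorem evalP_lorentzForm_single_add_single_add_single (h₀ : i₀ ∉ s) (h₁ : i₁ ∈ s)
    (h₂ : i₂ ∈ s) (h₁₂ : i₁ ≠ i₂) (a b c : ℝ) :
    evalP (lorentzForm i₀ s) (a • single i₀ 1 + b • single i₁ 1 + c • single i₂ 1) =
      ((a ^ 2 - (b ^ 2 + c ^ 2) : ℝ) : ℂ) := by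
  have h₀₁ : i₀ ≠ i₁ := ne_of_mem_of_not_mem h₁ h₀ |>.symm
  have h₀₂ : i₀ ≠ i₂ := ne_of_mem_of_not_mem h₂ h₀ |>.symm
  have hterm : ∀ i ∈ s, ((a • single i₀ 1 + b • single i₁ 1
      + c • single i₂ 1 : EuclideanSpace ℝ (Fin d)) i) ^ 2
      = (if i₁ = i then b ^ 2 else 0) + (if i₂ = i then c ^ 2 else 0) := by
    intro i hi
    have hi₀ : i₀ ≠ i := (ne_of_mem_of_not_mem hi h₀).symm
    by_cases hi₁ : i₁ = i
    · have hi₂ : i₂ ≠ i := hi₁ ▸ h₁₂.symm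
      simp [eq_comm (a := i), hi₀, hi₁, hi₂]
    · by_cases hi₂ : i₂ = i <;> simp [eq_comm (a := i), hi₀, hi₁, hi₂]
  rw [evalP_lorentzForm, Finset.sum_congr rfl hterm, Finset.sum_add_distrib,
    Finset.sum_ite_eq, Finset.sum_ite_eq, if_pos h₁, if_pos h₂]
  simp [h₀₁, h₀₂]

theorem sigmaPt_lorentzForm_single (h₀ : i₀ ∉ s) (h₁ : i₁ ∈ s) (h₂ : i₂ ∈ s) (h₁₂ : i₁ ≠ i₂) :
    sigmaPt (lorentzForm i₀ s) (single i₂ 1) = 0 := by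
  have heval := evalP_lorentzForm_single_add_single_add_single h₀ h₁ h₂ h₁₂
  let u : ℕ → EuclideanSpace ℝ (Fin d) := fun n => (n : ℝ) • single i₀ 1 + (n : ℝ) • single i₁ 1
  have hu : Tendsto (fun n => ‖u n‖) atTop atTop := by
    refine tendsto_atTop_mono (fun n => ?_) tendsto_natCast_atTop_atTop
    have h₀₁ : i₀ ≠ i₁ := (ne_of_mem_of_not_mem h₁ h₀).symm
    simpa [u, h₀₁] using PiLp.norm_apply_le (u n) i₀
  refine sigmaP_eq_zero_of_tendsto u hu fun t ht => ?_
  have ht₀ : 0 ≤ t := zero_le_one.trans ht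
  have hbound : ∀ n,
      tildeSupV (lorentzForm i₀ s) (Submodule.span ℝ {single i₂ 1}) (u n) t ≤ t ^ 2 := by
    intro n
    refine tildeSupV_le _ _ _ ht₀ fun η hη hηt => ?_
    obtain ⟨r, rfl⟩ := Submodule.mem_span_singleton.mp hη
    have hr : |r| ≤ t := by simpa [norm_smul] using hηt
    calc ‖evalP (lorentzForm i₀ s) (u n + r • single i₂ 1)‖ = r ^ 2 := by
          rw [heval, Complex.norm_real, Real.norm_eq_abs]
          simp
      _ ≤ t ^ 2 := by simpa using sq_le_sq' (neg_le_of_abs_le hr) (le_of_abs_le hr)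
  have hgrowth : ∀ n : ℕ, (n : ℝ) ≤ tildeSup (lorentzForm i₀ s) (u n) t := by
    intro n
    have hpoint : u n + t • single i₀ 1 = ((n : ℝ) + t) • single i₀ 1 + (n : ℝ) • single i₁ 1
        + (0 : ℝ) • single i₂ 1 := by
      module
    calc (n : ℝ) ≤ 2 * n * t + t ^ 2 := by nlinarith
      _ = ‖evalP (lorentzForm i₀ s) (u n + t • single i₀ 1)‖ := by
        rw [hpoint, heval, Complex.norm_real, Real.norm_eq_abs,
          ← abs_of_nonneg (by positivity : 0 ≤ 2 * (n : ℝ) * t + t ^ 2)]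
        ring_nf
      _ ≤ tildeSup (lorentzForm i₀ s) (u n) t :=
        norm_evalP_le_tildeSupV _ _ _ Submodule.mem_top (by simp [norm_smul, abs_of_nonneg ht₀])
  exact tendsto_bdd_div_atTop_nhds_zero (Eventually.of_forall fun n => tildeSupV_nonneg _ _ _ ht₀)
    (Eventually.of_forall hbound) (tendsto_atTop_mono hgrowth tendsto_natCast_atTop_atTop)

end lorentzForm

end

/-- Example 2.4: for `d ≥ 3` and `P(x) = x₁² - x₂² - ⋯ - x_d²` one has `σ_P(e_d) = 0`
although `P₂(e_d) = -1 ≠ 0`; in particular the inclusion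
`{y ∈ S^{d-1} : σ_P(y) = 0} ⊆ {y ∈ S^{d-1} : P_m(y) = 0}` fails. -/
theorem stmt9 (d : ℕ) (hd : 3 ≤ d) :
    let P : MvPolynomial (Fin d) ℂ :=
      MvPolynomial.X (⟨0, by omega⟩ : Fin d) ^ 2 -
        ∑ i ∈ Finset.univ.filter (fun i : Fin d => (i : ℕ) ≠ 0), MvPolynomial.X i ^ 2
    let ed : EuclideanSpace ℝ (Fin d) := EuclideanSpace.single (⟨d - 1, by omega⟩ : Fin d) 1
    sigmaPt P ed = 0 ∧
      evalP (MvPolynomial.homogeneousComponent P.totalDegree P) ed = -1 ∧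
      ¬ ({y : EuclideanSpace ℝ (Fin d) | ‖y‖ = 1 ∧ sigmaPt P y = 0} ⊆
          {y : EuclideanSpace ℝ (Fin d) | ‖y‖ = 1 ∧
            evalP (MvPolynomial.homogeneousComponent P.totalDegree P) y = 0}) := by
  intro P ed
  set s := Finset.univ.filter (fun i : Fin d => (i : ℕ) ≠ 0)
  have h₀ : (⟨0, by omega⟩ : Fin d) ∉ s := by simp [s]
  have h₁ : (⟨1, by omega⟩ : Fin d) ∈ s := by simp [s]
  have hD : (⟨d - 1, by omega⟩ : Fin d) ∈ s := by simp [s]; omega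
  have h₁D : (⟨1, by omega⟩ : Fin d) ≠ ⟨d - 1, by omega⟩ := by simp [Fin.ext_iff]; omega
  have hP : P = lorentzForm ⟨0, by omega⟩ s := rfl
  have hsig : sigmaPt P ed = 0 := sigmaPt_lorentzForm_single h₀ h₁ hD h₁D
  have hprincipal : evalP (homogeneousComponent P.totalDegree P) ed = -1 := by
    rw [hP, (isHomogeneous_lorentzForm _ s).homogeneousComponent_totalDegree]
    exact evalP_lorentzForm_single h₀ hD
  refine ⟨hsig, hprincipal, fun hsub => ?_⟩
  have := (hsub ⟨by simp [ed], hsig⟩).2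
  norm_num [hprincipal] at this

end
end
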